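/- Let W be a Krein-selfadjoint operator on H and B ∈ L(H) with closed range such that range(B) is W-nonnegative, and let Q ∈ L(H) be a projection (Q² = Q) with range(Q) = range(B) and W ∘ Q = Q^# ∘ W. Then W(I − Q) ≤ (BX − I)^# W (BX − I) in the Krein order for every X ∈ L(H), and there exists X₀ ∈ L(H) with (BX₀ − I)^# W (BX₀ − I) = W(I − Q); that is, the minimum over X ∈ L(H) of (BX − I)^# W (BX − I) exists and equals the Schur complement W(I − Q). -/

import Mathlib

open ContinuousLinearMap

/-- The Krein adjoint `T^# = J ∘ T* ∘ J`. -/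
noncomputable def kadj {H : Type*} [NormedAddCommGroup H] [InnerProductSpace ℂ H]
    [CompleteSpace H] (J T : H →L[ℂ] H) : H →L[ℂ] H := J ∘L adjoint T ∘L J

/-- The Krein order: `S ≤ T` iff `J ∘ (T - S)` is a positive operator. -/
def kLE {H : Type*} [NormedAddCommGroup H] [InnerProductSpace ℂ H]
    [CompleteSpace H] (J S T : H →L[ℂ] H) : Prop := (J ∘L (T - S)).IsPositive

/-!
With `A = B X - Q`, the relations `Q² = Q`, `W Q = Q^# W` and `Q B = B` give the identity
`(B X - I)^# W (B X - I) = W (I - Q) + A^# W A`. Since `J A^# W A = A* (J W) A` with `J W`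
selfadjoint and `A` takes values in `range B`, where `J W` is nonnegative, the last term is
Krein-positive. It vanishes when `B X = Q`, and such an `X` exists by Douglas' lemma because
`range Q = range B`.
-/

theorem sub_one_mul_mul_sub_one_eq {R : Type*} [Ring R] {W Q C Q' C' : R} (hQ : Q * Q = Q)
    (hWQ : W * Q = Q' * W) (hC : Q * C = C) (hC' : C' * Q' = C') :
    (C' - 1) * W * (C - 1) = W * (1 - Q) + (C' - Q') * W * (C - Q) := by
  have key : W * (1 - Q) + (C' - Q') * W * (C - Q) - (C' - 1) * W * (C - 1) =
      -((C' * Q' - C') * W) + C' * (Q' * W - W * Q) - (Q' * W - W * Q) * C - W * (Q * C - C)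
        + (Q' * W - W * Q) * Q + W * (Q * Q - Q) := by
    noncomm_ring
  rw [hQ, hWQ, hC, hC'] at key
  exact (sub_eq_zero.mp (by simpa using key)).symm

namespace ContinuousLinearMap

variable {𝕜 E F G : Type*} [RCLike 𝕜] [NormedAddCommGroup E] [InnerProductSpace 𝕜 E]
  [CompleteSpace E]

theorem IsSelfAdjoint.isPositive_adjoint_conj [NormedAddCommGroup F] [InnerProductSpace 𝕜 F]
    [CompleteSpace F] {T : E →L[𝕜] E} (hT : IsSelfAdjoint T) (S : F →L[𝕜] E)
    (hS : ∀ x, 0 ≤ RCLike.re (inner 𝕜 (T (S x)) (S x))) : (adjoint S ∘L T ∘L S).IsPositive :=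
  isPositive_def'.mpr ⟨hT.adjoint_conj S, fun x => by
    rw [reApplyInnerSelf, comp_apply, comp_apply, adjoint_inner_left]
    exact hS x⟩

theorem range_comp_orthogonal_ker [NormedAddCommGroup F] [NormedSpace 𝕜 F] (B : E →L[𝕜] F) :
    (B ∘L B.kerᗮ.subtypeL).range = B.range := by
  refine le_antisymm (LinearMap.range_comp_le_range _ _) ?_
  rintro _ ⟨x, rfl⟩
  refine ⟨⟨_, B.ker.sub_starProjection_mem_orthogonal x⟩, ?_⟩
  have hker : B (B.ker.starProjection x) = 0 := B.ker.starProjection_apply_mem x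
  simp [hker]

/-- Douglas' lemma: the algebraic solution `X` is continuous by the closed graph theorem. -/
theorem exists_comp_eq_of_range_le [NormedAddCommGroup F] [NormedSpace 𝕜 F]
    [NormedAddCommGroup G] [NormedSpace 𝕜 G] [CompleteSpace G] (B : E →L[𝕜] F) (Q : G →L[𝕜] F)
    (h : Q.range ≤ B.range) : ∃ X : G →L[𝕜] E, B ∘L X = Q := by
  set K := B.kerᗮ
  set B' : K →L[𝕜] F := B ∘L K.subtypeL
  have hinj : Function.Injective B' := (injective_iff_map_eq_zero B').mpr fun y hy =>
    Subtype.ext (Submodule.disjoint_def.mp B.ker.orthogonal_disjoint y hy y.2)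
  let e := LinearEquiv.ofInjective (B' : K →ₗ[𝕜] F) hinj
  let X : G →ₗ[𝕜] K := e.symm.toLinearMap ∘ₗ (Q : G →ₗ[𝕜] F).codRestrict _
    (fun y => (range_comp_orthogonal_ker B).ge (h ⟨y, rfl⟩))
  have hBX : ∀ y, B' (X y) = Q y := fun y =>
    congrArg Subtype.val (e.apply_symm_apply _)
  have hX : Continuous X := X.continuous_of_seq_closed_graph fun u y k hu hk => hinj <| by
    rw [hBX]
    exact tendsto_nhds_unique ((B'.continuous.tendsto k).comp hk)
      (by rw [show B' ∘ (X ∘ u) = Q ∘ u from funext fun n => hBX (u n)]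
          exact (Q.continuous.tendsto y).comp hu)
  exact ⟨K.subtypeL ∘L ⟨X, hX⟩, ext hBX⟩

end ContinuousLinearMap

section Krein

variable {H : Type*} [NormedAddCommGroup H] [InnerProductSpace ℂ H] [CompleteSpace H]
  {J : H →L[ℂ] H}

theorem kadj_sub (S T : H →L[ℂ] H) : kadj J (S - T) = kadj J S - kadj J T := by
  simp only [kadj, map_sub, sub_comp, comp_sub]

theorem kadj_one (hJ2 : J ∘L J = 1) : kadj J 1 = 1 := by
  rw [kadj, adjoint_one, one_def, id_comp]
  exact hJ2

theorem kadj_comp (hJ2 : J ∘L J = 1) (S T : H →L[ℂ] H) :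
    kadj J (S ∘L T) = kadj J T ∘L kadj J S := by
  simp only [kadj, adjoint_comp, comp_assoc]
  rw [← comp_assoc J J, hJ2, one_def, id_comp]

theorem comp_kadj (hJ2 : J ∘L J = 1) (T : H →L[ℂ] H) : J ∘L kadj J T = adjoint T ∘L J := by
  rw [kadj, ← comp_assoc, hJ2, one_def, id_comp]

theorem isSelfAdjoint_comp_of_kadj_eq (hJ : IsSelfAdjoint J) (hJ2 : J ∘L J = 1) {W : H →L[ℂ] H}
    (hW : kadj J W = W) : IsSelfAdjoint (J ∘L W) := by
  rw [isSelfAdjoint_iff', adjoint_comp, hJ.adjoint_eq, ← comp_kadj hJ2, hW]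

theorem kadj_sub_one_comp_comp_sub_one (hJ2 : J ∘L J = 1) {W Q C : H →L[ℂ] H}
    (hQ : Q ∘L Q = Q) (hWQ : W ∘L Q = kadj J Q ∘L W) (hC : Q ∘L C = C) :
    kadj J (C - 1) ∘L (W ∘L (C - 1)) = W ∘L (1 - Q) + kadj J (C - Q) ∘L (W ∘L (C - Q)) := by
  rw [kadj_sub, kadj_sub, kadj_one hJ2]
  have hC' : kadj J C ∘L kadj J Q = kadj J C := by rw [← kadj_comp hJ2, hC]
  simpa only [mul_def, comp_assoc] using sub_one_mul_mul_sub_one_eq hQ hWQ hC hC'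

end Krein

theorem stmt6_general {H : Type*} [NormedAddCommGroup H] [InnerProductSpace ℂ H] [CompleteSpace H]
    (J : H →L[ℂ] H) (hJ : IsSelfAdjoint J) (hJ2 : J ∘L J = 1)
    (W : H →L[ℂ] H) (hW : kadj J W = W)
    (B : H →L[ℂ] H)
    (hBpos : ∀ x : H, 0 ≤ (inner ℂ ((J ∘L W) (B x)) (B x) : ℂ).re)
    (Q : H →L[ℂ] H) (hQ : Q ∘L Q = Q)
    (hQran : LinearMap.range (Q : H →ₗ[ℂ] H) = LinearMap.range (B : H →ₗ[ℂ] H))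
    (hWQ : W ∘L Q = kadj J Q ∘L W) :
    (∀ X : H →L[ℂ] H,
      kLE J (W ∘L (1 - Q)) (kadj J (B ∘L X - 1) ∘L (W ∘L (B ∘L X - 1)))) ∧
    (∃ X₀ : H →L[ℂ] H,
      kadj J (B ∘L X₀ - 1) ∘L (W ∘L (B ∘L X₀ - 1)) = W ∘L (1 - Q)) := by
  have hQB : Q ∘L B = B :=
    ext fun x => (LinearMap.IsIdempotentElem.mem_range_iff
      (ContinuousLinearMap.IsIdempotentElem.toLinearMap hQ)).mp (hQran ▸ ⟨x, rfl⟩)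
  have hsplit X := kadj_sub_one_comp_comp_sub_one hJ2 hQ hWQ (C := B ∘L X)
    (by rw [← comp_assoc, hQB])
  refine ⟨fun X => ?_, ?_⟩
  · rw [kLE, hsplit, add_sub_cancel_left, ← comp_assoc, comp_kadj hJ2]
    convert (isSelfAdjoint_comp_of_kadj_eq hJ hJ2 hW).isPositive_adjoint_conj
      (B ∘L X - Q) (fun x => ?_) using 1
    · simp only [comp_assoc]
    obtain ⟨y, hy⟩ : (B ∘L X - Q) x ∈ LinearMap.range (B : H →ₗ[ℂ] H) :=
      sub_mem ⟨X x, rfl⟩ (hQran ▸ ⟨x, rfl⟩)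
    rw [← hy]
    exact hBpos y
  · obtain ⟨X₀, hX₀⟩ := exists_comp_eq_of_range_le B Q hQran.le
    exact ⟨X₀, by rw [hsplit, hX₀, sub_self, comp_zero, comp_zero, add_zero]⟩

/-- if `range B` is `W`-nonnegative and `Q` is a projection onto `range B`
with `W ∘ Q = Q^# ∘ W`, then the minimum over `X` of `(BX − I)^# W (BX − I)` exists and
equals the Schur complement `W(I − Q)`. -/
theorem stmt6 {H : Type*} [NormedAddCommGroup H] [InnerProductSpace ℂ H] [CompleteSpace H]
    (J : H →L[ℂ] H) (hJ : IsSelfAdjoint J) (hJ2 : J ∘L J = 1)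
    (W : H →L[ℂ] H) (hW : kadj J W = W)
    (B : H →L[ℂ] H) (hB : IsClosed (Set.range ⇑B))
    (hBpos : ∀ x : H, 0 ≤ (inner ℂ ((J ∘L W) (B x)) (B x) : ℂ).re)
    (Q : H →L[ℂ] H) (hQ : Q ∘L Q = Q)
    (hQran : LinearMap.range (Q : H →ₗ[ℂ] H) = LinearMap.range (B : H →ₗ[ℂ] H))
    (hWQ : W ∘L Q = kadj J Q ∘L W) :
    (∀ X : H →L[ℂ] H,
      kLE J (W ∘L (1 - Q)) (kadj J (B ∘L X - 1) ∘L (W ∘L (B ∘L X - 1)))) ∧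
    (∃ X₀ : H →L[ℂ] H,
      kadj J (B ∘L X₀ - 1) ∘L (W ∘L (B ∘L X₀ - 1)) = W ∘L (1 - Q)) :=
  stmt6_general J hJ hJ2 W hW B hBpos Q hQ hQran hWQ
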